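/- Let T be a tree with |W(T)| = |W(𝓛(T))| = 1 and write W(𝓛(T)) = {w}. Then: (i) 𝓛(T) consists of exactly two branches at w, namely B(T) − w and 𝓛(T) − B(T); and (ii) |V(B(T))| ≤ ⌊(|V(T)|−1)/2⌋. -/

import Mathlib

open scoped Classical

namespace RadioLabeling

variable {V : Type*} [Fintype V]

/-- The diameter of a graph: maximum distance between two vertices. -/
noncomputable def diam (G : SimpleGraph V) : ℕ :=
  Finset.univ.sup fun p : V × V => G.dist p.1 p.2

/-- A vertex set `S` induces a 2-connected subgraph: the induced subgraph is connected
and contains no cut-vertex. -/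
def TwoConn (G : SimpleGraph V) (S : Set V) : Prop :=
  (G.induce S).Connected ∧ ∀ v ∈ S, (S \ {v} : Set V) = ∅ ∨ (G.induce (S \ {v})).Connected

/-- A block: a maximal 2-connected induced subgraph. -/
def IsBlock (G : SimpleGraph V) (S : Set V) : Prop :=
  TwoConn G S ∧ ∀ T : Set V, S ⊆ T → TwoConn G T → T = S

/-- A block graph: a connected graph each of whose blocks is a clique. -/
def IsBlockGraph (G : SimpleGraph V) : Prop :=
  G.Connected ∧ ∀ S : Set V, IsBlock G S → G.IsClique S

/-- The weight of `G` at `v`: the sum of distances from `v` to all vertices. -/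
noncomputable def wt (G : SimpleGraph V) (v : V) : ℕ := ∑ u : V, G.dist u v

/-- The set of weight centers: vertices minimizing the weight. -/
def weightCenters (G : SimpleGraph V) : Set V := {v | ∀ u : V, wt G v ≤ wt G u}

/-- `nCloser G v u` = number of vertices strictly closer to `v` than to `u`. -/
noncomputable def nCloser (G : SimpleGraph V) (v u : V) : ℕ :=
  (Finset.univ.filter fun z => G.dist v z < G.dist u z).card

/-- A central vertex: either the unique weight center, or (when there are at least two
weight centers) a vertex of the central block, i.e. of a block containing all weight centers. -/
def IsCentral (G : SimpleGraph V) (w : V) : Prop :=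
  weightCenters G = {w} ∨
    (2 ≤ (weightCenters G).ncard ∧
      ∃ S : Set V, IsBlock G S ∧ weightCenters G ⊆ S ∧ w ∈ S)

/-- The level of a vertex: its distance to a nearest central vertex. -/
noncomputable def level (G : SimpleGraph V) (v : V) : ℕ :=
  sInf {n | ∃ w, IsCentral G w ∧ G.dist v w = n}

/-- The total level of `G`. -/
noncomputable def totalLevel (G : SimpleGraph V) : ℕ := ∑ v : V, level G v

/-- `eps G = 1` if `G` has a unique weight center, `0` otherwise. -/
noncomputable def eps (G : SimpleGraph V) : ℕ :=
  if (weightCenters G).ncard = 1 then 1 else 0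

/-- A radio labeling: `|f u - f v| ≥ diam G + 1 - dist u v` for all distinct `u`, `v`. -/
def IsRadioLabeling (G : SimpleGraph V) (f : V → ℕ) : Prop :=
  ∀ u v : V, u ≠ v → diam G + 1 ≤ G.dist u v + max (f u - f v) (f v - f u)

/-- The span of a labeling: the maximum difference of two labels. -/
noncomputable def span (f : V → ℕ) : ℕ :=
  Finset.univ.sup fun p : V × V => f p.1 - f p.2

/-- The radio number: minimum span of a radio labeling. -/
noncomputable def rn (G : SimpleGraph V) : ℕ :=
  sInf {s | ∃ f : V → ℕ, IsRadioLabeling G f ∧ span f = s}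

/-- `G` achieves the lower bound `(p-1)(d(G)+ε(G)) - 2L(G) + ε(G)` for the radio number. -/
def lbEq (G : SimpleGraph V) : Prop :=
  (rn G : ℤ) =
    ((Fintype.card V : ℤ) - 1) * ((diam G : ℤ) + (eps G : ℤ)) -
      2 * (totalLevel G : ℤ) + (eps G : ℤ)

/-- A lower bound block graph: a block graph whose radio number equals the lower bound. -/
def IsLowerBoundBlockGraph (G : SimpleGraph V) : Prop := IsBlockGraph G ∧ lbEq G

/-- `x` lies on a `(u,v)`-geodesic. -/
def OnGeodesic (G : SimpleGraph V) (x u v : V) : Prop :=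
  G.dist u v = G.dist u x + G.dist x v

/-- `x` is an ancestor of `v` (and `v` a descendent of `x`): `x` lies on the geodesic
from some central vertex to `v`. -/
def IsAncestor (G : SimpleGraph V) (x v : V) : Prop :=
  ∃ w : V, IsCentral G w ∧ OnGeodesic G x w v

/-- `phi G u v`: the maximum level of a common ancestor of `u` and `v`. -/
noncomputable def phi (G : SimpleGraph V) (u v : V) : ℕ :=
  sSup {n | ∃ x, IsAncestor G x u ∧ IsAncestor G x v ∧ level G x = n}

/-- `delta G u v = 1` iff the `(u,v)`-geodesic contains two central vertices. -/
noncomputable def delta (G : SimpleGraph V) (u v : V) : ℕ :=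
  if ∃ x y : V, x ≠ y ∧ IsCentral G x ∧ IsCentral G y ∧
      OnGeodesic G x u v ∧ OnGeodesic G y u v
    then 1 else 0

/-- `rho G u v = 0` iff the `(u,v)`-geodesic contains a central vertex or a common
ancestor of `u` and `v`. -/
noncomputable def rho (G : SimpleGraph V) (u v : V) : ℕ :=
  if ∃ x : V, OnGeodesic G x u v ∧
      (IsCentral G x ∨ (IsAncestor G x u ∧ IsAncestor G x v))
    then 0 else 1

/-- The central block: a block containing at least two weight centers, all of them. -/
def IsCentralBlock (G : SimpleGraph V) (D : Set V) : Prop :=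
  IsBlock G D ∧ 2 ≤ (weightCenters G).ncard ∧ weightCenters G ⊆ D

/-- `v` belongs to the branch of `G` determined by the non-central block `D` adjacent to the
central vertex `w`: `v` is a vertex of `D` other than `w`, or a descendent of such a vertex. -/
def InBranch (G : SimpleGraph V) (w : V) (D : Set V) (v : V) : Prop :=
  IsCentral G w ∧ IsBlock G D ∧ w ∈ D ∧ ¬ IsCentralBlock G D ∧
    ∃ u ∈ D, u ≠ w ∧ IsAncestor G u v

/-- Two vertices are in different branches: branches induced by two different blocks
adjacent to the same central vertex. -/
def DifferentBranches (G : SimpleGraph V) (u v : V) : Prop :=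
  ∃ w D₁ D₂, D₁ ≠ D₂ ∧ InBranch G w D₁ u ∧ InBranch G w D₂ v

/-- Two vertices are in opposite branches: branches induced by blocks adjacent to two
different central vertices. -/
def OppositeBranches (G : SimpleGraph V) (u v : V) : Prop :=
  ∃ w₁ w₂ D₁ D₂, w₁ ≠ w₂ ∧ InBranch G w₁ D₁ u ∧ InBranch G w₂ D₂ v

/-- Two vertices lie in the same branch. -/
def SameBranch (G : SimpleGraph V) (u v : V) : Prop :=
  ∃ w D, InBranch G w D u ∧ InBranch G w D v


noncomputable instance edgeSetFintype (G : SimpleGraph V) : Fintype G.edgeSet :=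
  Set.Finite.fintype (Set.toFinite _)

/-- The set `B(T)` of vertices of the line graph of `T` (i.e. edges of `T`): the vertex `w`
(the unique weight center of the line graph) together with all edges of `T` whose far endpoint
is a descendant, in `T` rooted at its weight center `r`, of the far endpoint of `w`;
equivalently, the edges `e` having an endpoint `x` such that both endpoints of `w` lie on the
`(r,x)`-geodesic in `T`. -/
def edgeDescSet (T : SimpleGraph V) (r : V) (w : T.edgeSet) : Set T.edgeSet :=
  {e | e = w ∨ ∃ x ∈ (e : Sym2 V), ∀ y ∈ (w : Sym2 V), T.dist r x = T.dist r y + T.dist y x}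

/-!
Orient `w = cd` so that `d` is farther than `c` from the weight center `r` of `T`. The blocks
of the line graph of a tree are the stars of edges at a vertex, so the blocks at `w` are the
stars at `c` and at `d`; both contain an edge other than `w`, at `c` because `r` is the only
weight center of `T`, at `d` because `w` is the only one of `𝓛(T)`. In `𝓛(T)` the vertex `w`
separates the edges on the two sides of `cd`, which identifies the branch of the star at `d`
with the edges below `d`, i.e. `B(T) - w`, and that of the star at `c` with `𝓛(T) - B(T)`.

For the bound, send each edge of `B(T)` to its endpoint away from `c`. This is injective and
lands in the subtree below the neighbour `n` of `r` towards `d`; moving from `r` to `n` changes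
the weight by `|V(T)| - 2|subtree below n|`, which is positive since `r` is the weight center.
-/

open SimpleGraph

section Connected

variable {V : Type*} {G : SimpleGraph V}

lemma dist_add_dist_le_length {u v x : V} (p : G.Walk u v) (hx : x ∈ p.support) :
    G.dist u x + G.dist x v ≤ p.length := by
  have h := congrArg Walk.length (p.take_spec hx)
  rw [Walk.length_append] at h
  have := dist_le (p.takeUntil x hx)
  have := dist_le (p.dropUntil x hx)
  omega

lemma dist_eq_add_of_forall_mem_support (hG : G.Connected) {u v x : V}
    (h : ∀ p : G.Walk u v, x ∈ p.support) : G.dist u v = G.dist u x + G.dist x v := by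
  obtain ⟨p, hp⟩ := hG.exists_walk_length_eq_dist u v
  have := dist_add_dist_le_length p (h p)
  have : G.dist u v ≤ G.dist u x + G.dist x v := hG.dist_triangle
  omega

lemma exists_adj_dist_eq_add_one (hG : G.Connected) {u v : V} (h : u ≠ v) :
    ∃ x, G.Adj u x ∧ G.dist u v = G.dist x v + 1 := by
  obtain ⟨p, hp⟩ := hG.exists_walk_length_eq_dist u v
  cases p with
  | nil => exact absurd rfl h
  | @cons _ x _ hux q =>
    refine ⟨x, hux, ?_⟩
    have := dist_le q
    have : G.dist u v ≤ G.dist u x + G.dist x v := hG.dist_triangle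
    have : G.dist u x = 1 := dist_eq_one_iff_adj.2 hux
    rw [Walk.length_cons] at hp
    omega

section Weight

variable [Fintype V]

/-- After swapping the terms of `a` and `b`, compare termwise: a geodesic from `x ≠ a` to `a`
enters through a neighbour of `a`, which is within distance one of `b`. -/
lemma wt_le_wt_of_forall_adj (hG : G.Connected) {a b : V}
    (h : ∀ z, G.Adj a z → G.dist b z ≤ 1) : wt G b ≤ wt G a := by
  have hle : ∀ x, x ≠ a → G.dist x b ≤ G.dist x a := by
    intro x hxa
    obtain ⟨z, haz, hz⟩ := exists_adj_dist_eq_add_one hG (Ne.symm hxa)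
    have : G.dist b x ≤ G.dist b z + G.dist z x := hG.dist_triangle
    have := h z haz
    rw [dist_comm (u := x), dist_comm (u := x)]
    omega
  unfold wt
  rw [← Equiv.sum_comp (Equiv.swap a b) (fun x => G.dist x b)]
  refine Finset.sum_le_sum fun x _ => ?_
  rcases eq_or_ne x a with rfl | hxa
  · simp
  rcases eq_or_ne x b with rfl | hxb
  · rw [Equiv.swap_apply_right, dist_comm]
  · rw [Equiv.swap_apply_of_ne_of_ne hxa hxb]
    exact hle x hxa

lemma eq_of_wt_le_of_weightCenters_eq {r u : V} (hr : weightCenters G = {r})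
    (hu : wt G u ≤ wt G r) : u = r := by
  have hmin : r ∈ weightCenters G := hr ▸ rfl
  have : u ∈ weightCenters G := fun v => hu.trans (hmin v)
  rwa [hr] at this

end Weight

end Connected

section Induce

variable {V : Type*} {G : SimpleGraph V}

lemma mem_of_induce_connected {S : Set V} (hS : (G.induce S).Connected) {u v x : V}
    (hu : u ∈ S) (hv : v ∈ S) (h : ∀ p : G.Walk u v, x ∈ p.support) : x ∈ S := by
  obtain ⟨p⟩ := hS.preconnected ⟨u, hu⟩ ⟨v, hv⟩
  have := h (p.map (Embedding.induce S).toHom)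
  obtain ⟨y, -, rfl⟩ := List.mem_map.1 (Walk.support_map _ p ▸ this)
  exact y.2

lemma induce_connected_of_isClique {S : Set V} (hne : S.Nonempty) (hS : G.IsClique S) :
    (G.induce S).Connected := by
  refine (connected_iff _).2 ⟨fun u v => ?_, hne.to_subtype⟩
  rcases eq_or_ne u v with rfl | huv
  · rfl
  · exact Adj.reachable (G := G.induce S) (hS u.2 v.2 (Subtype.coe_ne_coe.2 huv))

lemma twoConn_of_isClique {S : Set V} (hne : S.Nonempty) (hS : G.IsClique S) : TwoConn G S :=
  ⟨induce_connected_of_isClique hne hS, fun v _ => (S \ {v}).eq_empty_or_nonempty.imp_right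
    fun h => induce_connected_of_isClique h (IsClique.subset Set.sdiff_subset hS)⟩

end Induce

section LineGraph

variable {V : Type*} {G : SimpleGraph V}

lemma lineGraph_adj_of_mem {e f : G.edgeSet} (hne : e ≠ f) {x : V}
    (he : x ∈ (e : Sym2 V)) (hf : x ∈ (f : Sym2 V)) : G.lineGraph.Adj e f :=
  lineGraph_adj_iff_exists.2 ⟨hne, x, he, hf⟩

lemma lineGraph_dist_le_one_of_mem {e f : G.edgeSet} {x : V}
    (he : x ∈ (e : Sym2 V)) (hf : x ∈ (f : Sym2 V)) : G.lineGraph.dist e f ≤ 1 := by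
  rcases eq_or_ne e f with rfl | hne
  · simp
  · exact (dist_eq_one_iff_adj.2 (lineGraph_adj_of_mem hne he hf)).le

lemma lineGraph_reachable_of_walk {x y : V} (p : G.Walk x y) {e f : G.edgeSet}
    (he : x ∈ (e : Sym2 V)) (hf : y ∈ (f : Sym2 V)) : G.lineGraph.Reachable e f := by
  induction p generalizing e with
  | nil =>
    rcases eq_or_ne e f with rfl | hne
    · rfl
    · exact (lineGraph_adj_of_mem hne he hf).reachable
  | cons hxz q ih =>
    let g : G.edgeSet := ⟨s(_, _), hxz⟩
    have hstep : G.lineGraph.Reachable e g := by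
      rcases eq_or_ne e g with rfl | hne
      · rfl
      · exact (lineGraph_adj_of_mem hne he (Sym2.mem_mk_left _ _)).reachable
    exact hstep.trans (ih (e := g) (Sym2.mem_mk_right _ _) hf)

lemma lineGraph_connected (hG : G.Connected) [Nonempty G.edgeSet] : G.lineGraph.Connected := by
  refine (connected_iff _).2 ⟨fun e f => ?_, inferInstance⟩
  obtain ⟨p⟩ := hG.preconnected (e : Sym2 V).out.1 (f : Sym2 V).out.1
  exact lineGraph_reachable_of_walk p (Sym2.out_fst_mem _) (Sym2.out_fst_mem _)

end LineGraph

section Tree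

variable {V : Type*} {T : SimpleGraph V}

/-- For an edge `ab` of a tree, `side T a b` is the vertex set of the component of `T - ab`
containing `b`. -/
def side (T : SimpleGraph V) (a b : V) : Set V := {x | T.dist x a = T.dist x b + 1}

lemma mem_side_or_mem_side (hT : T.IsTree) {a b : V} (hab : T.Adj a b) (x : V) :
    x ∈ side T a b ∨ x ∈ side T b a :=
  hT.dist_eq_dist_add_one_of_adj x hab

lemma notMem_side_of_mem_side {a b x : V} (hx : x ∈ side T a b) : x ∉ side T b a := by
  simp only [side, Set.mem_ofPred_eq] at hx ⊢
  omega

lemma mem_side_right {a b : V} (hab : T.Adj a b) : b ∈ side T a b := by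
  simp [side, dist_eq_one_iff_adj.2 hab.symm]

lemma eq_of_adj_of_mem_side (hT : T.IsTree) {a b x y : V} (hab : T.Adj a b) (hxy : T.Adj x y)
    (hx : x ∈ side T b a) (hy : y ∈ side T a b) : x = a ∧ y = b := by
  simp only [side, Set.mem_ofPred_eq] at hx hy
  have hc := hT.connected
  have : T.dist x b ≤ T.dist x y + T.dist y b := hc.dist_triangle
  have : T.dist y a ≤ T.dist y x + T.dist x a := hc.dist_triangle
  have : T.dist x y = 1 := dist_eq_one_iff_adj.2 hxy
  have : T.dist y x = 1 := dist_eq_one_iff_adj.2 hxy.symm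
  have hxa : T.dist x a = T.dist y b := by omega
  -- `x → y ⇝ b` and `x ⇝ a → b` are both geodesics, hence the same path
  obtain ⟨q, hq⟩ := hc.exists_walk_length_eq_dist y b
  obtain ⟨p, hp⟩ := hc.exists_walk_length_eq_dist x a
  have hyb : (Walk.cons hxy q).IsPath := Walk.isPath_of_length_eq_dist _ (by simp; omega)
  have hab' : (p.concat hab).IsPath := Walk.isPath_of_length_eq_dist _ (by simp; omega)
  have heq := (hT.existsUnique_path x b).unique hyb hab'
  have hy_mem : y ∈ (p.concat hab).support := heq ▸ by simp
  rw [Walk.support_concat, List.mem_append, List.mem_singleton] at hy_mem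
  rcases hy_mem with hy_mem | rfl
  · have := dist_add_dist_le_length p hy_mem
    omega
  · have : T.dist x a = 0 := by simp [hxa]
    exact ⟨hc.dist_eq_zero_iff.1 this, rfl⟩

lemma edge_eq_of_mem_side (hT : T.IsTree) {a b x y : V} (hab : T.Adj a b) {e : Sym2 V}
    (he : e ∈ T.edgeSet) (hxe : x ∈ e) (hye : y ∈ e) (hx : x ∈ side T b a)
    (hy : y ∈ side T a b) : e = s(a, b) := by
  have hxy : x ≠ y := fun h => notMem_side_of_mem_side hy (h ▸ hx)
  obtain ⟨z, rfl⟩ := Sym2.mem_iff_exists.1 hxe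
  obtain rfl : y = z := by simpa [hxy.symm] using hye
  obtain ⟨rfl, rfl⟩ := eq_of_adj_of_mem_side hT hab he hx hy
  rfl

lemma mem_support_of_mem_side (hT : T.IsTree) {a b : V} (hab : T.Adj a b) {u v : V}
    (p : T.Walk u v) (hu : u ∈ side T b a) (hv : v ∈ side T a b) : b ∈ p.support := by
  induction p with
  | nil => exact absurd hv (notMem_side_of_mem_side hu)
  | @cons u x v hux q ih =>
    rcases mem_side_or_mem_side hT hab x with hx | hx
    · obtain ⟨-, rfl⟩ := eq_of_adj_of_mem_side hT hab hux hu hx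
      simp
    · exact List.mem_cons_of_mem _ (ih hx hv)

/-- Seen from a root `r` on the `a`-side, the `b`-side of `ab` is the set of descendants of `b`. -/
lemma mem_side_iff_dist_eq_add (hT : T.IsTree) {a b r : V} (hab : T.Adj a b)
    (hr : r ∈ side T b a) (x : V) :
    x ∈ side T a b ↔ T.dist r x = T.dist r b + T.dist b x := by
  have hc := hT.connected
  constructor
  · exact fun hx => dist_eq_add_of_forall_mem_support hc
      fun p => mem_support_of_mem_side hT hab p hr hx
  · intro hx
    refine (mem_side_or_mem_side hT hab x).resolve_right fun hx' => ?_
    simp only [side, Set.mem_ofPred_eq] at hr hx'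
    have : T.dist r x ≤ T.dist r a + T.dist a x := hc.dist_triangle
    have : T.dist a x = T.dist x a := dist_comm
    have : T.dist b x = T.dist x b := dist_comm
    omega

lemma eq_of_adj_of_dist_eq_add_one (hT : T.IsTree) {c x y y' : V} (hy : T.Adj y x)
    (hy' : T.Adj y' x) (h : T.dist c x = T.dist c y + 1) (h' : T.dist c x = T.dist c y' + 1) :
    y = y' := by
  have hc := hT.connected
  obtain ⟨p, hp⟩ := hc.exists_walk_length_eq_dist c y
  obtain ⟨p', hp'⟩ := hc.exists_walk_length_eq_dist c y'
  have hP : (p.concat hy).IsPath := Walk.isPath_of_length_eq_dist _ (by simp; omega)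
  have hP' : (p'.concat hy').IsPath := Walk.isPath_of_length_eq_dist _ (by simp; omega)
  exact (Walk.concat_inj ((hT.existsUnique_path c x).unique hP hP')).1

lemma edge_eq_of_far_endpoint (hT : T.IsTree) {c x : V} {e₁ e₂ : T.edgeSet}
    (h₁ : x ∈ (e₁ : Sym2 V)) (h₂ : x ∈ (e₂ : Sym2 V))
    (hfar₁ : ∀ y ∈ (e₁ : Sym2 V), T.dist c y ≤ T.dist c x)
    (hfar₂ : ∀ y ∈ (e₂ : Sym2 V), T.dist c y ≤ T.dist c x) : e₁ = e₂ := by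
  obtain ⟨y₁, hy₁⟩ := Sym2.mem_iff_exists.1 h₁
  obtain ⟨y₂, hy₂⟩ := Sym2.mem_iff_exists.1 h₂
  have hadj₁ : T.Adj x y₁ := by simpa [hy₁] using e₁.2
  have hadj₂ : T.Adj x y₂ := by simpa [hy₂] using e₂.2
  have hd₁ : T.dist c y₁ ≤ T.dist c x := hfar₁ y₁ (by simp [hy₁])
  have hd₂ : T.dist c y₂ ≤ T.dist c x := hfar₂ y₂ (by simp [hy₂])
  have := hT.dist_eq_dist_add_one_of_adj c hadj₁
  have := hT.dist_eq_dist_add_one_of_adj c hadj₂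
  obtain rfl : y₁ = y₂ := eq_of_adj_of_dist_eq_add_one (c := c) hT hadj₁.symm hadj₂.symm
    (by omega) (by omega)
  exact Subtype.ext (hy₁.trans hy₂.symm)

lemma ncard_le_ncard_of_far_endpoint [Finite V] (hT : T.IsTree) (c : V) {E : Set T.edgeSet}
    {S : Set V}
    (h : ∀ e ∈ E, ∀ x ∈ (e : Sym2 V), (∀ y ∈ (e : Sym2 V), T.dist c y ≤ T.dist c x) → x ∈ S) :
    E.ncard ≤ S.ncard := by
  have hfar : ∀ e : T.edgeSet,
      ∃ x ∈ (e : Sym2 V), ∀ y ∈ (e : Sym2 V), T.dist c y ≤ T.dist c x := by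
    rintro ⟨e, -⟩
    induction e using Sym2.ind with
    | _ p q =>
      rcases le_total (T.dist c p) (T.dist c q) with hpq | hqp
      · exact ⟨q, Sym2.mem_mk_right p q, by simp [hpq]⟩
      · exact ⟨p, Sym2.mem_mk_left p q, by simp [hqp]⟩
  choose f hfe hff using hfar
  refine Set.ncard_le_ncard_of_injOn f (fun e he => h e he _ (hfe e) (hff e))
    (fun e₁ _ e₂ _ heq => ?_) (Set.toFinite _)
  exact edge_eq_of_far_endpoint hT (hfe e₁) (heq ▸ hfe e₂) (hff e₁) (heq ▸ hff e₂)

/-- Moving from `a` to `b` brings the vertices of the `b`-side one step closer and all others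
one step farther. -/
lemma wt_add_two_mul_ncard_side [Fintype V] (hT : T.IsTree) {a b : V} (hab : T.Adj a b) :
    wt T b + 2 * (side T a b).ncard = wt T a + Fintype.card V := by
  have hterm : ∀ x, T.dist x b + 2 * (if x ∈ side T a b then 1 else 0) = T.dist x a + 1 := by
    intro x
    rcases mem_side_or_mem_side hT hab x with hx | hx
    · simp only [side, Set.mem_ofPred_eq] at hx
      simp [side, hx]
    · have hx' := notMem_side_of_mem_side hx
      simp only [side, Set.mem_ofPred_eq] at hx hx'
      simp [side, hx']
      omega
  have hcard : (side T a b).ncard = ∑ x, if x ∈ side T a b then 1 else 0 := by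
    rw [Finset.sum_boole, Set.ncard_eq_toFinset_card']
    simp
  unfold wt
  rw [hcard, Finset.mul_sum, ← Finset.sum_add_distrib, Finset.sum_congr rfl fun x _ => hterm x,
    Finset.sum_add_distrib]
  simp

end Tree

section LineGraphOfTree

variable {V : Type*} {T : SimpleGraph V}

def edgeSide (T : SimpleGraph V) (a b : V) : Set T.edgeSet :=
  {e | ∀ x ∈ (e : Sym2 V), x ∈ side T a b}

def edgesAt (T : SimpleGraph V) (x : V) : Set T.edgeSet := {e | x ∈ (e : Sym2 V)}

lemma mem_edgeSide_of_mem (hT : T.IsTree) {a b x : V} (hab : T.Adj a b) {e : T.edgeSet}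
    (he : (e : Sym2 V) ≠ s(a, b)) (hxe : x ∈ (e : Sym2 V)) (hx : x ∈ side T a b) :
    e ∈ edgeSide T a b := fun y hye =>
  (mem_side_or_mem_side hT hab y).resolve_right fun hy =>
    he (edge_eq_of_mem_side hT hab e.2 hye hxe hy hx)

lemma notMem_edgeSide {a b : V} (hab : T.Adj a b) {w : T.edgeSet} (hw : (w : Sym2 V) = s(a, b)) :
    w ∉ edgeSide T a b := fun h =>
  notMem_side_of_mem_side (h a (hw ▸ Sym2.mem_mk_left a b)) (mem_side_right hab.symm)

lemma compl_insert_edgeSide (hT : T.IsTree) {a b : V} (hab : T.Adj a b) {w : T.edgeSet}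
    (hw : (w : Sym2 V) = s(a, b)) : (insert w (edgeSide T a b))ᶜ = edgeSide T b a := by
  ext e
  simp only [Set.mem_compl_iff, Set.mem_insert_iff, not_or]
  constructor
  · rintro ⟨hew, hne⟩
    have hew' : (e : Sym2 V) ≠ s(b, a) := fun h =>
      hew (Subtype.ext ((h.trans Sym2.eq_swap).trans hw.symm))
    simp only [edgeSide, Set.mem_ofPred_eq, not_forall] at hne
    obtain ⟨x, hxe, hx⟩ := hne
    exact mem_edgeSide_of_mem hT hab.symm hew' hxe
      ((mem_side_or_mem_side hT hab x).resolve_left hx)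
  · intro he
    refine ⟨?_, fun h => ?_⟩
    · rintro rfl
      exact notMem_edgeSide hab.symm (hw.trans Sym2.eq_swap) he
    · exact notMem_side_of_mem_side (h _ (Sym2.out_fst_mem _)) (he _ (Sym2.out_fst_mem _))

lemma mem_support_of_lineGraph_walk (hT : T.IsTree) {a b : V} (hab : T.Adj a b) {g : T.edgeSet}
    (hg : (g : Sym2 V) = s(a, b)) {e f : T.edgeSet} (p : T.lineGraph.Walk e f) {x y : V}
    (hxe : x ∈ (e : Sym2 V)) (hx : x ∈ side T b a) (hyf : y ∈ (f : Sym2 V))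
    (hy : y ∈ side T a b) : g ∈ p.support := by
  induction p generalizing x with
  | @nil e =>
    simpa using Subtype.ext (hg.trans (edge_eq_of_mem_side hT hab e.2 hxe hyf hx hy).symm)
  | @cons e e₁ f he₁ q ih =>
    rcases eq_or_ne e g with rfl | hne
    · exact Walk.start_mem_support _
    obtain ⟨-, z, hze, hze₁⟩ := lineGraph_adj_iff_exists.1 he₁
    have hz : z ∈ side T b a := (mem_side_or_mem_side hT hab z).resolve_left fun hz =>
      hne (Subtype.ext ((edge_eq_of_mem_side hT hab e.2 hxe hze hx hz).trans hg.symm))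
    exact List.mem_cons_of_mem _ (ih hze₁ hz hyf)

/-- Two disjoint edges `e`, `f` of a tree are separated in the line graph by the first edge
of the tree path from `f` towards `e`. -/
lemma exists_separating_edge (hT : T.IsTree) {e f : T.edgeSet} (hne : e ≠ f)
    (hnadj : ¬ T.lineGraph.Adj e f) :
    ∃ g, g ≠ e ∧ g ≠ f ∧ ∀ p : T.lineGraph.Walk e f, g ∈ p.support := by
  have hc := hT.connected
  obtain ⟨q, hqe⟩ : ∃ q, q ∈ (e : Sym2 V) := ⟨_, Sym2.out_fst_mem _⟩
  obtain ⟨s, t, hf, hst⟩ : ∃ s t, (f : Sym2 V) = s(s, t) ∧ T.dist q t = T.dist q s + 1 := by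
    obtain ⟨⟨u, v⟩, huv⟩ := Sym2.mk_surjective (f : Sym2 V)
    have hadj : T.Adj u v := by simpa [← huv] using f.2
    rcases hT.dist_eq_dist_add_one_of_adj q hadj with h | h
    · exact ⟨v, u, huv.symm.trans Sym2.eq_swap, h⟩
    · exact ⟨u, v, huv.symm, h⟩
  have hsf : s ∈ (f : Sym2 V) := hf ▸ Sym2.mem_mk_left s t
  have hse : s ∉ (e : Sym2 V) := fun hse => hnadj (lineGraph_adj_of_mem hne hse hsf)
  obtain ⟨s₁, hss₁, hs₁⟩ := exists_adj_dist_eq_add_one hc fun h : s = q => hse (h ▸ hqe)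
  refine ⟨⟨s(s₁, s), hss₁.symm⟩, fun h => hse (h ▸ Sym2.mem_mk_right s₁ s), fun h => ?_,
    fun p => mem_support_of_lineGraph_walk hT hss₁.symm rfl p hqe ?_ hsf
      (mem_side_right hss₁.symm)⟩
  · have hs₁f : s₁ ∈ (f : Sym2 V) := h ▸ Sym2.mem_mk_left s₁ s
    rw [hf, Sym2.mem_iff] at hs₁f
    rcases hs₁f with h | h
    · exact hss₁.ne h.symm
    · rw [← h, SimpleGraph.dist_comm, SimpleGraph.dist_comm (u := q)] at hst
      omega
  · simp only [side, Set.mem_ofPred_eq]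
    rw [SimpleGraph.dist_comm, SimpleGraph.dist_comm (u := q)]
    exact hs₁

lemma isClique_of_twoConn (hT : T.IsTree) {S : Set T.edgeSet} (hS : TwoConn T.lineGraph S) :
    T.lineGraph.IsClique S := by
  intro e he f hf hne
  by_contra hnadj
  obtain ⟨g, hge, hgf, hsep⟩ := exists_separating_edge hT hne hnadj
  rcases hS.2 g (mem_of_induce_connected hS.1 he hf hsep) with hempty | hconn
  · exact hempty.subset ⟨he, Ne.symm hge⟩
  · exact (mem_of_induce_connected hconn ⟨he, Ne.symm hge⟩ ⟨hf, Ne.symm hgf⟩ hsep).2 rfl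

/-- Trees are triangle-free. -/
lemma mem_of_lineGraph_adj_of_adj (hT : T.IsTree) {e₁ e₂ z : T.edgeSet} {x : V}
    (h12 : e₁ ≠ e₂) (h₁ : x ∈ (e₁ : Sym2 V)) (h₂ : x ∈ (e₂ : Sym2 V))
    (hz₁ : T.lineGraph.Adj z e₁) (hz₂ : T.lineGraph.Adj z e₂) : x ∈ (z : Sym2 V) := by
  by_contra hxz
  obtain ⟨-, t₁, ht₁z, ht₁⟩ := lineGraph_adj_iff_exists.1 hz₁
  obtain ⟨-, t₂, ht₂z, ht₂⟩ := lineGraph_adj_iff_exists.1 hz₂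
  have he₁ := (Sym2.mem_and_mem_iff fun h : x = t₁ => hxz (h ▸ ht₁z)).1 ⟨h₁, ht₁⟩
  have he₂ := (Sym2.mem_and_mem_iff fun h : x = t₂ => hxz (h ▸ ht₂z)).1 ⟨h₂, ht₂⟩
  have ht : t₁ ≠ t₂ := by
    rintro rfl
    exact h12 (Subtype.ext (he₁.trans he₂.symm))
  have hz := (Sym2.mem_and_mem_iff ht).1 ⟨ht₁z, ht₂z⟩
  have hxt₁ : T.Adj x t₁ := by simpa [he₁] using e₁.2
  have hxt₂ : T.Adj x t₂ := by simpa [he₂] using e₂.2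
  have ht₁t₂ : T.Adj t₁ t₂ := by simpa [hz] using z.2
  exact hT.dist_ne_of_adj x ht₁t₂
    ((dist_eq_one_iff_adj.2 hxt₁).trans (dist_eq_one_iff_adj.2 hxt₂).symm)

lemma isClique_edgesAt (x : V) : T.lineGraph.IsClique (edgesAt T x) :=
  fun _ he _ hf hne => lineGraph_adj_of_mem hne he hf

lemma isBlock_edgesAt (hT : T.IsTree) {x : V} {e₁ e₂ : T.edgeSet} (h12 : e₁ ≠ e₂)
    (h₁ : x ∈ (e₁ : Sym2 V)) (h₂ : x ∈ (e₂ : Sym2 V)) :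
    IsBlock T.lineGraph (edgesAt T x) := by
  refine ⟨twoConn_of_isClique ⟨e₁, h₁⟩ (isClique_edgesAt x), fun Z hsub hZ => ?_⟩
  refine Set.Subset.antisymm (fun z hz => ?_) hsub
  have hZc := isClique_of_twoConn hT hZ
  by_contra hxz
  have hz₁ : z ≠ e₁ := fun h => hxz (h ▸ h₁)
  have hz₂ : z ≠ e₂ := fun h => hxz (h ▸ h₂)
  exact hxz (mem_of_lineGraph_adj_of_adj hT h12 h₁ h₂ (hZc hz (hsub h₁) hz₁)
    (hZc hz (hsub h₂) hz₂))

lemma eq_edgesAt_of_isBlock (hT : T.IsTree) {a b : V} {w : T.edgeSet}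
    (hw : (w : Sym2 V) = s(a, b)) {D : Set T.edgeSet} (hD : IsBlock T.lineGraph D) (hwD : w ∈ D) :
    D = edgesAt T a ∨ D = edgesAt T b := by
  have hDc := isClique_of_twoConn hT hD.1
  have of_subset : ∀ x ∈ (w : Sym2 V), D ⊆ edgesAt T x → D = edgesAt T x :=
    fun x hx h => (hD.2 _ h (twoConn_of_isClique ⟨w, hx⟩ (isClique_edgesAt x))).symm
  have haw : a ∈ (w : Sym2 V) := hw ▸ Sym2.mem_mk_left a b
  have hbw : b ∈ (w : Sym2 V) := hw ▸ Sym2.mem_mk_right a b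
  by_cases ha : D ⊆ edgesAt T a
  · exact Or.inl (of_subset a haw ha)
  obtain ⟨e, heD, hae⟩ := Set.not_subset.1 ha
  have hew : e ≠ w := fun h => hae (h ▸ haw)
  have hbe : b ∈ (e : Sym2 V) := by
    obtain ⟨-, z, hze, hzw⟩ := lineGraph_adj_iff_exists.1 (hDc heD hwD hew)
    rw [hw, Sym2.mem_iff] at hzw
    rcases hzw with rfl | rfl
    · exact absurd hze hae
    · exact hze
  refine Or.inr (of_subset b hbw fun f hfD => ?_)
  rcases eq_or_ne f w with rfl | hfw
  · exact hbw
  rcases eq_or_ne f e with rfl | hfe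
  · exact hbe
  exact mem_of_lineGraph_adj_of_adj hT hew hbe hbw (hDc hfD heD hfe) (hDc hfD hwD hfw)

lemma edgeDescSet_eq (hT : T.IsTree) {r c d : V} (hcd : T.Adj c d) {w : T.edgeSet}
    (hw : (w : Sym2 V) = s(c, d)) (hr : r ∈ side T d c) :
    edgeDescSet T r w = insert w (edgeSide T c d) := by
  have hc := hT.connected
  have hdesc := mem_side_iff_dist_eq_add hT hcd hr
  ext e
  rcases eq_or_ne e w with rfl | hew
  · simp [edgeDescSet]
  have hew' : (e : Sym2 V) ≠ s(c, d) := fun h => hew (Subtype.ext (h.trans hw.symm))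
  simp only [edgeDescSet, Set.mem_ofPred_eq, Set.mem_insert_iff, hew, false_or, hw,
    Sym2.mem_iff, forall_eq_or_imp, forall_eq]
  constructor
  · rintro ⟨x, hxe, -, hx⟩
    exact mem_edgeSide_of_mem hT hcd hew' hxe ((hdesc x).2 hx)
  · intro he
    obtain ⟨x, hxe⟩ : ∃ x, x ∈ (e : Sym2 V) := ⟨_, Sym2.out_fst_mem _⟩
    have hx := (hdesc x).1 (he x hxe)
    refine ⟨x, hxe, ?_, hx⟩
    simp only [side, Set.mem_ofPred_eq] at hr
    have : T.dist c x ≤ T.dist c d + T.dist d x := hc.dist_triangle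
    have : T.dist r x ≤ T.dist r c + T.dist c x := hc.dist_triangle
    have : T.dist c d = 1 := dist_eq_one_iff_adj.2 hcd
    omega

end LineGraphOfTree

section Branches

lemma inBranch_iff {G : SimpleGraph V} {w : V} (hw : weightCenters G = {w}) {D : Set V} {v : V} :
    InBranch G w D v ↔
      IsBlock G D ∧ w ∈ D ∧ ∃ u ∈ D, u ≠ w ∧ OnGeodesic G u w v := by
  have hcentral : ∀ x, IsCentral G x ↔ x = w := by
    refine fun x => ⟨?_, fun h => Or.inl (h ▸ hw)⟩
    rintro (h | ⟨h, -⟩)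
    · exact (Set.singleton_eq_singleton_iff.1 (hw.symm.trans h)).symm
    · simp [hw] at h
  have hnot : ¬ IsCentralBlock G D := fun h => by simpa [hw] using h.2.1
  simp only [InBranch, IsAncestor, hcentral, exists_eq_left, hnot, not_false_eq_true, true_and]

variable {T : SimpleGraph V}

lemma setOf_inBranch_edgesAt (hT : T.IsTree) {a b : V} (hab : T.Adj a b) {w : T.edgeSet}
    (hw : (w : Sym2 V) = s(a, b)) (hwL : weightCenters T.lineGraph = {w}) {e : T.edgeSet}
    (hew : e ≠ w) (hbe : b ∈ (e : Sym2 V)) :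
    {v | InBranch T.lineGraph w (edgesAt T b) v} = edgeSide T a b := by
  have : Nonempty T.edgeSet := ⟨w⟩
  have hL := lineGraph_connected hT.connected
  have hbw : b ∈ (w : Sym2 V) := hw ▸ Sym2.mem_mk_right a b
  have hblock := isBlock_edgesAt hT hew hbe hbw
  ext v
  simp only [Set.mem_ofPred_eq, inBranch_iff hwL, hblock, true_and, OnGeodesic]
  constructor
  · rintro ⟨-, u, hbu, huw, hgeo⟩ x hxv
    refine (mem_side_or_mem_side hT hab x).resolve_right fun hx => ?_
    have hsplit := dist_eq_add_of_forall_mem_support hL fun p =>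
      mem_support_of_lineGraph_walk hT hab hw p hxv hx hbu (mem_side_right hab)
    have : T.lineGraph.dist w u = 1 :=
      dist_eq_one_iff_adj.2 (lineGraph_adj_of_mem (Ne.symm huw) hbw hbu)
    rw [SimpleGraph.dist_comm, SimpleGraph.dist_comm (u := v)] at hsplit
    omega
  · intro hv
    refine ⟨hbw, ?_⟩
    have hvw : v ≠ w := by
      rintro rfl
      exact notMem_edgeSide hab hw hv
    obtain ⟨u, hwu, hdist⟩ := exists_adj_dist_eq_add_one hL hvw.symm
    obtain ⟨huw, z, hzw, hzu⟩ := lineGraph_adj_iff_exists.1 hwu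
    have hwu' : T.lineGraph.dist w u = 1 := dist_eq_one_iff_adj.2 hwu
    have hzb : z = b := by
      rw [hw, Sym2.mem_iff] at hzw
      refine hzw.resolve_left ?_
      rintro rfl
      -- then `w` would lie on a geodesic from its neighbour `u` to `v`
      obtain ⟨q, hq⟩ := hL.exists_walk_length_eq_dist u v
      have := dist_add_dist_le_length q (mem_support_of_lineGraph_walk hT hab hw q hzu
        (mem_side_right hab.symm) (Sym2.out_fst_mem _) (hv _ (Sym2.out_fst_mem _)))
      rw [SimpleGraph.dist_comm] at this
      omega
    refine ⟨u, hzb ▸ hzu, Ne.symm huw, ?_⟩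
    have : T.lineGraph.dist w v ≤ T.lineGraph.dist w u + T.lineGraph.dist u v := hL.dist_triangle
    omega

lemma branches_eq_edgeSide (hT : T.IsTree) {a b : V} (hab : T.Adj a b) {w : T.edgeSet}
    (hw : (w : Sym2 V) = s(a, b)) (hwL : weightCenters T.lineGraph = {w})
    (ha : ∃ e ≠ w, a ∈ (e : Sym2 V)) (hb : ∃ e ≠ w, b ∈ (e : Sym2 V)) :
    {S : Set T.edgeSet |
        (∃ D : Set T.edgeSet, S = {v | InBranch T.lineGraph w D v}) ∧ S ≠ ∅} =
      {edgeSide T a b, edgeSide T b a} := by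
  obtain ⟨e, hew, hae⟩ := ha
  obtain ⟨f, hfw, hbf⟩ := hb
  have hw' : (w : Sym2 V) = s(b, a) := hw.trans Sym2.eq_swap
  have hBb := setOf_inBranch_edgesAt hT hab hw hwL hfw hbf
  have hBa := setOf_inBranch_edgesAt hT hab.symm hw' hwL hew hae
  have ne_of_ne_w : ∀ {g : T.edgeSet} {x y : V}, (w : Sym2 V) = s(x, y) → g ≠ w →
      (g : Sym2 V) ≠ s(x, y) := fun hwxy hgw h => hgw (Subtype.ext (h.trans hwxy.symm))
  have hfb : f ∈ edgeSide T a b :=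
    mem_edgeSide_of_mem hT hab (ne_of_ne_w hw hfw) hbf (mem_side_right hab)
  have hea : e ∈ edgeSide T b a :=
    mem_edgeSide_of_mem hT hab.symm (ne_of_ne_w hw' hew) hae (mem_side_right hab.symm)
  ext S
  simp only [Set.mem_ofPred_eq, Set.mem_insert_iff, Set.mem_singleton_iff]
  constructor
  · rintro ⟨⟨D, rfl⟩, hS⟩
    obtain ⟨v, hv⟩ := Set.nonempty_iff_ne_empty.2 hS
    obtain ⟨hD, hwD, -⟩ := (inBranch_iff hwL).1 hv
    rcases eq_edgesAt_of_isBlock hT hw hD hwD with rfl | rfl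
    · exact Or.inr hBa
    · exact Or.inl hBb
  · rintro (rfl | rfl)
    · exact ⟨⟨_, hBb.symm⟩, Set.nonempty_iff_ne_empty.1 ⟨f, hfb⟩⟩
    · exact ⟨⟨_, hBa.symm⟩, Set.nonempty_iff_ne_empty.1 ⟨e, hea⟩⟩

end Branches

section Center

variable {T : SimpleGraph V}

lemma exists_edge_ne_at_near_end (hT : T.IsTree) {r c d : V} (hrT : weightCenters T = {r})
    (hcd : T.Adj c d) {w : T.edgeSet} (hw : (w : Sym2 V) = s(c, d)) (hr : r ∈ side T d c) :
    ∃ e ≠ w, c ∈ (e : Sym2 V) := by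
  have hc := hT.connected
  obtain ⟨z, hcz, hzd⟩ : ∃ z, T.Adj c z ∧ z ≠ d := by
    rcases eq_or_ne c r with rfl | hcr
    · by_contra! h
      refine hcd.ne (eq_of_wt_le_of_weightCenters_eq hrT
        (wt_le_wt_of_forall_adj hc fun z hz => ?_)).symm
      simp [h z hz]
    · obtain ⟨z, hcz, hz⟩ := exists_adj_dist_eq_add_one hc hcr
      refine ⟨z, hcz, ?_⟩
      rintro rfl
      simp only [side, Set.mem_ofPred_eq] at hr
      rw [SimpleGraph.dist_comm, SimpleGraph.dist_comm (u := z)] at hz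
      omega
  exact ⟨⟨s(c, z), hcz⟩,
    fun h => hzd (Sym2.congr_right.1 ((congrArg Subtype.val h).trans hw)), Sym2.mem_mk_left c z⟩

/-- If `d` were a leaf, every neighbour of `w = cd` in the line graph would contain `c`, so any
other edge at `c` would weigh no more than `w`. -/
lemma exists_edge_ne_at_far_end (hT : T.IsTree) {c d : V} {w : T.edgeSet}
    (hw : (w : Sym2 V) = s(c, d)) (hwL : weightCenters T.lineGraph = {w})
    (hc : ∃ e ≠ w, c ∈ (e : Sym2 V)) : ∃ e ≠ w, d ∈ (e : Sym2 V) := by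
  have : Nonempty T.edgeSet := ⟨w⟩
  obtain ⟨u, huw, hcu⟩ := hc
  by_contra! h
  refine huw (eq_of_wt_le_of_weightCenters_eq hwL
    (wt_le_wt_of_forall_adj (lineGraph_connected hT.connected) fun e hwe => ?_))
  obtain ⟨hne, z, hzw, hze⟩ := lineGraph_adj_iff_exists.1 hwe
  rw [hw, Sym2.mem_iff] at hzw
  rcases hzw with rfl | rfl
  · exact lineGraph_dist_le_one_of_mem hcu hze
  · exact absurd hze (h e (Ne.symm hne))

lemma ncard_insert_edgeSide_le (hT : T.IsTree) {r c d : V} (hrT : weightCenters T = {r})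
    (hcd : T.Adj c d) {w : T.edgeSet} (hw : (w : Sym2 V) = s(c, d)) (hr : r ∈ side T d c) :
    (insert w (edgeSide T c d)).ncard ≤ (Fintype.card V - 1) / 2 := by
  have hc := hT.connected
  have hB : (insert w (edgeSide T c d)).ncard ≤ (side T c d).ncard := by
    refine ncard_le_ncard_of_far_endpoint hT c fun e he x hxe hfar => ?_
    rcases he with rfl | he
    · rw [hw, Sym2.mem_iff] at hxe
      rcases hxe with rfl | rfl
      · have h := hfar d (hw ▸ Sym2.mem_mk_right x d)
        rw [dist_self, dist_eq_one_iff_adj.2 hcd] at h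
        exact absurd h (by decide)
      · exact mem_side_right hcd
    · exact he x hxe
  have hrd : r ≠ d := by
    rintro rfl
    simp [side] at hr
  obtain ⟨n, hrn, hn⟩ := exists_adj_dist_eq_add_one hc hrd
  have hsub : side T c d ⊆ side T r n := by
    intro x hx
    rw [mem_side_iff_dist_eq_add hT hcd hr] at hx
    rw [mem_side_iff_dist_eq_add hT hrn (mem_side_right hrn.symm)]
    have : T.dist n x ≤ T.dist n d + T.dist d x := hc.dist_triangle
    have : T.dist r x ≤ T.dist r n + T.dist n x := hc.dist_triangle
    have : T.dist r n = 1 := dist_eq_one_iff_adj.2 hrn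
    omega
  have hwt := wt_add_two_mul_ncard_side hT hrn
  have hlt : wt T r < wt T n :=
    lt_of_not_ge fun h => hrn.ne (eq_of_wt_le_of_weightCenters_eq hrT h).symm
  have := Set.ncard_le_ncard hsub (Set.toFinite _)
  omega

end Center

/-- for a tree `T` with `|W(T)| = |W(𝓛(T))| = 1`, `W(𝓛(T)) = {w}`:
(i) the branches of `𝓛(T)` (at its unique central vertex `w`) are exactly `B(T) - w` and
`𝓛(T) - B(T)`; and (ii) `|B(T)| ≤ ⌊(|V(T)|-1)/2⌋`. -/
theorem stmt12 {V : Type*} [Fintype V] (T : SimpleGraph V) (hT : T.IsTree)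
    (r : V) (w : T.edgeSet)
    (hrT : weightCenters T = {r})
    (hwL : weightCenters (SimpleGraph.lineGraph T) = {w}) :
    ({S : Set T.edgeSet |
        (∃ D : Set T.edgeSet, S = {v | InBranch (SimpleGraph.lineGraph T) w D v}) ∧ S ≠ ∅}
      = {edgeDescSet T r w \ {w}, (edgeDescSet T r w)ᶜ}) ∧
    (edgeDescSet T r w).ncard ≤ (Fintype.card V - 1) / 2 := by
  obtain ⟨c, d, hcd, hw, hr⟩ :
      ∃ c d, T.Adj c d ∧ (w : Sym2 V) = s(c, d) ∧ r ∈ side T d c := by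
    obtain ⟨⟨c, d⟩, hw⟩ := Sym2.mk_surjective (w : Sym2 V)
    have hcd : T.Adj c d := by simpa [← hw] using w.2
    rcases mem_side_or_mem_side hT hcd r with h | h
    · exact ⟨d, c, hcd.symm, hw.symm.trans Sym2.eq_swap, h⟩
    · exact ⟨c, d, hcd, hw.symm, h⟩
  have hc := exists_edge_ne_at_near_end hT hrT hcd hw hr
  have hd := exists_edge_ne_at_far_end hT hw hwL hc
  rw [edgeDescSet_eq hT hcd hw hr, Set.insert_sdiff_self_of_notMem (notMem_edgeSide hcd hw),
    compl_insert_edgeSide hT hcd hw]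
  exact ⟨branches_eq_edgeSide hT hcd hw hwL hc hd, ncard_insert_edgeSide_le hT hrT hcd hw hr⟩

end RadioLabeling
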